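/- (Part of Proposition 2) The product * preserves the quasi-periodicity property 2: fix n₁,…,n_h ∈ ℤ. Suppose f ∈ F_l satisfies, for every 1 ≤ i ≤ h and 1 ≤ α ≤ l_i, f(…, x_{α,i}+1, …; u) = f(…, x_{α,i}, …; u) and f(…, x_{α,i}+η, …; u) = e^{−2πi(n_i x_{α,i} + u_i − (l,δ_i)τ)} f(…, x_{α,i}, …; u), and g ∈ F_{l'} satisfies the same conditions with l replaced by l'. Then f*g satisfies these conditions with l replaced by l+l': for every i, α and every point (x; u) at which θ(x_{a,p} − x_{b,q}) ≠ 0 for all distinct x-variable slots, (f*g)(…, x_{α,i}+1, …; u) = (f*g)(…, x_{α,i}, …; u) and (f*g)(…, x_{α,i}+η, …; u) = e^{−2πi(n_i x_{α,i} + u_i − (l+l',δ_i)τ)} (f*g)(…, x_{α,i}, …; u). -/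

import Mathlib

/-!
The sum defining `f * g` runs over permutations `σ`, and for fixed `σ` a shift of `x_{α,i}` shifts
exactly one argument of `f` or of `g`, together with the θ-ratios `θ(z - c)/θ(z)` in which it
occurs. Such a ratio is `1`-periodic in `z` and picks up `e^{±2πic}` under `z ↦ z ± η`. For a slot
of `f` the ratios contribute `e^{2πi(l',δ_i)τ}` (using `(δ_i,δ_j) = (δ_j,δ_i)`); for a slot of `g`
they contribute `e^{-2πi(l,δ_i)τ}`, which together with the shift `u ↦ u - 2(l,δ)τ` in the
argument of `g` again gives the multiplier of `F_{l+l'}`. So every summand transforms correctly.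
-/

open Complex

/-- The theta function `θ(z) = Σ_{α∈ℤ} (−1)^α e^{2πi(αz + α(α−1)η/2)}`. -/
noncomputable def theta (η : ℂ) (z : ℂ) : ℂ :=
  ∑' n : ℤ, (-1) ^ n * Complex.exp (2 * (Real.pi : ℂ) * I * (n * z + n * (n - 1) / 2 * η))

/-- The space of functions `f(x_{1,1},…,x_{l_h,h}; u_1,…,u_h)` of `l₁+⋯+l_h` variables
`x_{α,i}` (grouped into `h` groups of sizes `l i`) and `h` variables `u_i`. -/
def FF (h : ℕ) (l : Fin h → ℕ) : Type :=
  (∀ i : Fin h, Fin (l i) → ℂ) → (Fin h → ℂ) → ℂ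

/-- `f ∈ F_l` is symmetric in each group of variables `{x_{1,i},…,x_{l_i,i}}`. -/
def IsSymFF {h : ℕ} {l : Fin h → ℕ} (f : FF h l) : Prop :=
  ∀ (σ : ∀ i : Fin h, Equiv.Perm (Fin (l i))) (x : ∀ i : Fin h, Fin (l i) → ℂ)
    (u : Fin h → ℂ), f (fun i => x i ∘ σ i) u = f x u

/-- The product `f*g` of formula (2), where `d i j = (δ_i, δ_j)` are the scalar products. -/
noncomputable def starMul {h : ℕ} (η τ : ℂ) (d : Fin h → Fin h → ℂ)
    {l l' : Fin h → ℕ} (f : FF h l) (g : FF h l') : FF h (fun i => l i + l' i) :=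
  fun x u =>
    (∏ i : Fin h, ((l i).factorial * (l' i).factorial : ℂ))⁻¹ *
    ∑ σ : ∀ i : Fin h, Equiv.Perm (Fin (l i + l' i)),
      f (fun i a => x i (σ i (Fin.castAdd (l' i) a))) u *
      g (fun i b => x i (σ i (Fin.natAdd (l i) b)))
        (fun i => u i - 2 * (∑ j : Fin h, (l j : ℂ) * d j i) * τ) *
      ∏ i : Fin h, ∏ j : Fin h, ∏ a : Fin (l i), ∏ b : Fin (l' j),
        (theta η (x i (σ i (Fin.castAdd (l' i) a)) - x j (σ j (Fin.natAdd (l j) b)) - d i j * τ) /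
         theta η (x i (σ i (Fin.castAdd (l' i) a)) - x j (σ j (Fin.natAdd (l j) b))))

/-- Property 2 (quasi-periodicity) for `f ∈ F_l`, with characters `n : Fin h → ℤ`:
in each variable `x_{α,i}`, `f` is `1`-periodic and transforms under `x_{α,i} ↦ x_{α,i}+η`
by the factor `e^{−2πi(n_i x_{α,i} + u_i − (l,δ_i)τ)}`. -/
def QuasiPeriodic {h : ℕ} (η τ : ℂ) (d : Fin h → Fin h → ℂ) (n : Fin h → ℤ)
    {l : Fin h → ℕ} (f : FF h l) : Prop :=
  ∀ (x : ∀ i : Fin h, Fin (l i) → ℂ) (u : Fin h → ℂ) (i : Fin h) (a : Fin (l i)),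
    f (Function.update x i (Function.update (x i) a (x i a + 1))) u = f x u ∧
    f (Function.update x i (Function.update (x i) a (x i a + η))) u =
      Complex.exp (-(2 * (Real.pi : ℂ) * I) *
        ((n i : ℂ) * x i a + u i - (∑ j : Fin h, (l j : ℂ) * d j i) * τ)) * f x u

open Function Finset

noncomputable def thetaRatio (η c z : ℂ) : ℂ :=
  theta η (z - c) / theta η z

theorem theta_periodic (η : ℂ) : Periodic (theta η) 1 := by
  intro z
  refine tsum_congr fun n => ?_
  rw [show 2 * (Real.pi : ℂ) * I * (n * (z + 1) + n * (n - 1) / 2 * η)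
      = 2 * Real.pi * I * (n * z + n * (n - 1) / 2 * η) + n * (2 * Real.pi * I) by ring,
    Complex.exp_add, exp_int_mul_two_pi_mul_I, mul_one]

theorem theta_add_eta (η z : ℂ) :
    theta η (z + η) = -Complex.exp (-(2 * Real.pi * I) * z) * theta η z := by
  unfold theta
  -- compare the `n`-th term on the left with the `(n + 1)`-st on the right
  rw [← tsum_mul_left, ← (Equiv.addRight (1 : ℤ)).tsum_eq (f := fun n : ℤ => _ * (_ * _))]
  refine tsum_congr fun n => ?_
  rw [Equiv.coe_addRight, zpow_add_one₀ (by norm_num), mul_neg_one, Int.cast_add, Int.cast_one,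
    show 2 * (Real.pi : ℂ) * I * ((n + 1) * z + (n + 1) * (n + 1 - 1) / 2 * η)
      = 2 * Real.pi * I * z + 2 * Real.pi * I * (n * (z + η) + n * (n - 1) / 2 * η) by ring,
    Complex.exp_add, neg_mul (2 * (Real.pi : ℂ) * I), Complex.exp_neg]
  field_simp

theorem thetaRatio_periodic (η c : ℂ) : Periodic (thetaRatio η c) 1 := fun z => by
  rw [thetaRatio, thetaRatio, add_sub_right_comm, theta_periodic, theta_periodic]

theorem thetaRatio_add_eta (η c z : ℂ) :
    thetaRatio η c (z + η) = Complex.exp (2 * Real.pi * I * c) * thetaRatio η c z := by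
  rw [thetaRatio, thetaRatio, add_sub_right_comm, theta_add_eta, theta_add_eta,
    mul_div_mul_comm, neg_div_neg_eq, ← Complex.exp_sub]
  congr 2
  ring

theorem thetaRatio_sub_eta (η c z : ℂ) :
    thetaRatio η c (z - η) = Complex.exp (-(2 * Real.pi * I) * c) * thetaRatio η c z := by
  rw [← sub_add_cancel z η, thetaRatio_add_eta, add_sub_cancel_right, ← mul_assoc,
    ← Complex.exp_add, neg_mul, neg_add_cancel, Complex.exp_zero, one_mul]

theorem prod_apply_update_eq_mul {ι M : Type*} [Fintype ι] [DecidableEq ι] [CommMonoid M]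
    {β : ι → Type*} (G : ∀ i, β i → M) (y : ∀ i, β i) (i₀ : ι) (v : β i₀) (c : M)
    (hc : G i₀ v = c * G i₀ (y i₀)) :
    ∏ i, G i (update y i₀ v i) = c * ∏ i, G i (y i) := by
  rw [← mul_prod_erase _ _ (mem_univ i₀), ← mul_prod_erase _ (fun i => G i (y i)) (mem_univ i₀),
    update_self, hc, mul_assoc]
  congr 2
  exact prod_congr rfl fun i hi => by rw [update_of_ne (ne_of_mem_erase hi)]

theorem prod_prod_apply_update_update_eq_mul {ι α M : Type*} [Fintype ι] [DecidableEq ι]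
    [CommMonoid M] {κ : ι → Type*} [∀ i, Fintype (κ i)] [∀ i, DecidableEq (κ i)]
    (G : ∀ i, κ i → α → M) (y : ∀ i, κ i → α) (i₀ : ι) (k₀ : κ i₀) (v : α) (c : M)
    (hc : G i₀ k₀ v = c * G i₀ k₀ (y i₀ k₀)) :
    ∏ i, ∏ k, G i k (update y i₀ (update (y i₀) k₀ v) i k) = c * ∏ i, ∏ k, G i k (y i k) :=
  prod_apply_update_eq_mul (fun i z => ∏ k, G i k (z k)) y i₀ _ c
    (prod_apply_update_eq_mul (G i₀) (y i₀) k₀ v c hc)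

theorem prod_exp_mul_pow {ι : Type*} [Fintype ι] (s : ℂ) (w : ι → ℂ) (k : ι → ℕ) :
    ∏ j, Complex.exp (s * w j) ^ k j = Complex.exp (s * ∑ j, k j * w j) := by
  simp only [← Complex.exp_nat_mul, ← Complex.exp_sum, mul_sum, mul_left_comm]

section Blocks

variable {ι α : Type*} [DecidableEq ι] {κ μ : ι → Type*} [∀ i, DecidableEq (μ i)]
  (x : ∀ i, μ i → α) (e : ∀ i, κ i → μ i)

theorem update_update_comp_of_injective [∀ i, DecidableEq (κ i)] {i₀ : ι}
    (he : Injective (e i₀)) (k₀ : κ i₀) (v : α) :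
    (fun i k => update x i₀ (update (x i₀) (e i₀ k₀) v) i (e i k))
      = update (fun i k => x i (e i k)) i₀ (update (fun k => x i₀ (e i₀ k)) k₀ v) := by
  funext i k
  rcases eq_or_ne i i₀ with rfl | hi
  · simp only [update_self]
    exact congrFun (update_comp_eq_of_injective (x i) he k₀ v) k
  · simp only [update_of_ne hi]

theorem update_update_comp_of_notMem_range {i₀ : ι} {m₀ : μ i₀} (hm : m₀ ∉ Set.range (e i₀))
    (v : α) :
    (fun i k => update x i₀ (update (x i₀) m₀ v) i (e i k)) = fun i k => x i (e i k) := by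
  funext i k
  rcases eq_or_ne i i₀ with rfl | hi
  · simp only [update_self]
    exact congrFun (update_comp_eq_of_notMem_range (x i) v hm) k
  · simp only [update_of_ne hi]

end Blocks

section StarProduct

variable {h : ℕ} {l l' : Fin h → ℕ}

theorem perm_split_update_eq_mul (T : (∀ i, Fin (l i) → ℂ) → (∀ i, Fin (l' i) → ℂ) → ℂ)
    (F : ℂ → ℂ) (i : Fin h) (t : ℂ)
    (hleft : ∀ y₁ y₂ a, T (update y₁ i (update (y₁ i) a (y₁ i a + t))) y₂ = F (y₁ i a) * T y₁ y₂)
    (hright : ∀ y₁ y₂ b, T y₁ (update y₂ i (update (y₂ i) b (y₂ i b + t))) = F (y₂ i b) * T y₁ y₂)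
    (σ : ∀ i, Equiv.Perm (Fin (l i + l' i))) (x : ∀ i, Fin (l i + l' i) → ℂ)
    (a : Fin (l i + l' i)) :
    T (fun p q => update x i (update (x i) a (x i a + t)) p (σ p (Fin.castAdd (l' p) q)))
        (fun p q => update x i (update (x i) a (x i a + t)) p (σ p (Fin.natAdd (l p) q)))
      = F (x i a) * T (fun p q => x p (σ p (Fin.castAdd (l' p) q)))
          (fun p q => x p (σ p (Fin.natAdd (l p) q))) := by
  obtain ⟨c, rfl⟩ := (σ i).surjective a
  induction c using Fin.addCases with
  | left a =>
    rw [update_update_comp_of_injective x (fun p q => σ p (Fin.castAdd (l' p) q))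
        ((σ i).injective.comp (Fin.castAdd_injective _ _)) a,
      update_update_comp_of_notMem_range x (fun p q => σ p (Fin.natAdd (l p) q))]
    · exact hleft _ _ a
    · rintro ⟨b, hb⟩
      simp only [EmbeddingLike.apply_eq_iff_eq, Fin.ext_iff, Fin.val_natAdd, Fin.val_castAdd] at hb
      omega
  | right b =>
    rw [update_update_comp_of_notMem_range x (fun p q => σ p (Fin.castAdd (l' p) q)),
      update_update_comp_of_injective x (fun p q => σ p (Fin.natAdd (l p) q))
        ((σ i).injective.comp (Fin.natAdd_injective _ _)) b]
    · exact hright _ _ b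
    · rintro ⟨a, ha⟩
      simp only [EmbeddingLike.apply_eq_iff_eq, Fin.ext_iff, Fin.val_castAdd, Fin.val_natAdd] at ha
      omega

variable (η τ : ℂ) (d : Fin h → Fin h → ℂ)

noncomputable def crossFactor (y₁ : ∀ i, Fin (l i) → ℂ) (y₂ : ∀ j, Fin (l' j) → ℂ) : ℂ :=
  ∏ i, ∏ j, ∏ a, ∏ b, thetaRatio η (d i j * τ) (y₁ i a - y₂ j b)

theorem crossFactor_update_left (t : ℂ) (m : ℂ → ℂ)
    (hm : ∀ c z, thetaRatio η c (z + t) = m c * thetaRatio η c z)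
    (y₁ : ∀ i, Fin (l i) → ℂ) (y₂ : ∀ j, Fin (l' j) → ℂ) (i : Fin h) (a : Fin (l i)) :
    crossFactor η τ d (update y₁ i (update (y₁ i) a (y₁ i a + t))) y₂
      = (∏ j, m (d i j * τ) ^ l' j) * crossFactor η τ d y₁ y₂ := by
  have hswap : ∀ y : ∀ i, Fin (l i) → ℂ, crossFactor η τ d y y₂
      = ∏ i, ∏ a, ∏ j, ∏ b, thetaRatio η (d i j * τ) (y i a - y₂ j b) :=
    fun _ => prod_congr rfl fun _ _ => prod_comm
  rw [hswap, hswap]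
  refine prod_prod_apply_update_update_eq_mul
    (fun i _ z => ∏ j, ∏ b, thetaRatio η (d i j * τ) (z - y₂ j b)) y₁ i a _ _ ?_
  simp only [add_sub_right_comm _ t, hm, prod_mul_distrib, prod_const, card_univ, Fintype.card_fin]

theorem crossFactor_update_right (t : ℂ) (m : ℂ → ℂ)
    (hm : ∀ c z, thetaRatio η c (z - t) = m c * thetaRatio η c z)
    (y₁ : ∀ i, Fin (l i) → ℂ) (y₂ : ∀ j, Fin (l' j) → ℂ) (j : Fin h) (b : Fin (l' j)) :
    crossFactor η τ d y₁ (update y₂ j (update (y₂ j) b (y₂ j b + t)))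
      = (∏ i, m (d i j * τ) ^ l i) * crossFactor η τ d y₁ y₂ := by
  have hswap : ∀ y : ∀ j, Fin (l' j) → ℂ, crossFactor η τ d y₁ y
      = ∏ j, ∏ b, ∏ i, ∏ a, thetaRatio η (d i j * τ) (y₁ i a - y j b) := by
    intro y
    rw [crossFactor, prod_comm]
    refine prod_congr rfl fun j _ => ?_
    rw [← prod_comm]
    exact prod_congr rfl fun i _ => prod_comm
  rw [hswap, hswap]
  refine prod_prod_apply_update_update_eq_mul
    (fun j _ z => ∏ i, ∏ a, thetaRatio η (d i j * τ) (y₁ i a - z)) y₂ j b _ _ ?_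
  simp only [sub_add_eq_sub_sub, hm, prod_mul_distrib, prod_const, card_univ, Fintype.card_fin]

noncomputable def starTerm (f : FF h l) (g : FF h l') (u : Fin h → ℂ)
    (y₁ : ∀ i, Fin (l i) → ℂ) (y₂ : ∀ j, Fin (l' j) → ℂ) : ℂ :=
  f y₁ u * g y₂ (fun i => u i - 2 * (∑ j, (l j : ℂ) * d j i) * τ) * crossFactor η τ d y₁ y₂

theorem starMul_eq_sum_starTerm (f : FF h l) (g : FF h l') (x : ∀ i, Fin (l i + l' i) → ℂ)
    (u : Fin h → ℂ) :
    starMul η τ d f g x u = (∏ i, ((l i).factorial * (l' i).factorial : ℂ))⁻¹ *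
      ∑ σ : ∀ i, Equiv.Perm (Fin (l i + l' i)), starTerm η τ d f g u
        (fun p q => x p (σ p (Fin.castAdd (l' p) q))) (fun p q => x p (σ p (Fin.natAdd (l p) q))) :=
  rfl

theorem starMul_update_eq_mul (f : FF h l) (g : FF h l') (u : Fin h → ℂ) (i : Fin h) (t : ℂ)
    (F : ℂ → ℂ)
    (hleft : ∀ y₁ y₂ a, starTerm η τ d f g u (update y₁ i (update (y₁ i) a (y₁ i a + t))) y₂
      = F (y₁ i a) * starTerm η τ d f g u y₁ y₂)
    (hright : ∀ y₁ y₂ b, starTerm η τ d f g u y₁ (update y₂ i (update (y₂ i) b (y₂ i b + t)))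
      = F (y₂ i b) * starTerm η τ d f g u y₁ y₂)
    (x : ∀ i, Fin (l i + l' i) → ℂ) (a : Fin (l i + l' i)) :
    starMul η τ d f g (update x i (update (x i) a (x i a + t))) u
      = F (x i a) * starMul η τ d f g x u := by
  simp only [starMul_eq_sum_starTerm, perm_split_update_eq_mul _ F i t hleft hright, ← mul_sum]
  ring

variable (n : Fin h → ℤ) {f : FF h l} {g : FF h l'} (u : Fin h → ℂ) (i : Fin h)

theorem starTerm_update_left_add_one (hfq : QuasiPeriodic η τ d n f) (y₁ : ∀ i, Fin (l i) → ℂ)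
    (y₂ : ∀ j, Fin (l' j) → ℂ) (a : Fin (l i)) :
    starTerm η τ d f g u (update y₁ i (update (y₁ i) a (y₁ i a + 1))) y₂
      = starTerm η τ d f g u y₁ y₂ := by
  rw [starTerm, starTerm, (hfq y₁ u i a).1,
    crossFactor_update_left η τ d 1 (fun _ => 1)
      fun c z => (thetaRatio_periodic η c z).trans (one_mul _).symm]
  simp only [one_pow, prod_const_one, one_mul]

theorem starTerm_update_right_add_one (hgq : QuasiPeriodic η τ d n g) (y₁ : ∀ i, Fin (l i) → ℂ)
    (y₂ : ∀ j, Fin (l' j) → ℂ) (b : Fin (l' i)) :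
    starTerm η τ d f g u y₁ (update y₂ i (update (y₂ i) b (y₂ i b + 1)))
      = starTerm η τ d f g u y₁ y₂ := by
  rw [starTerm, starTerm, (hgq y₂ _ i b).1,
    crossFactor_update_right η τ d 1 (fun _ => 1)
      fun c z => ((thetaRatio_periodic η c).sub_eq z).trans (one_mul _).symm]
  simp only [one_pow, prod_const_one, one_mul]

theorem starTerm_update_left_add_eta (hd : ∀ i j, d i j = d j i) (hfq : QuasiPeriodic η τ d n f)
    (y₁ : ∀ i, Fin (l i) → ℂ) (y₂ : ∀ j, Fin (l' j) → ℂ) (a : Fin (l i)) :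
    starTerm η τ d f g u (update y₁ i (update (y₁ i) a (y₁ i a + η))) y₂
      = Complex.exp (-(2 * (Real.pi : ℂ) * I) *
          ((n i : ℂ) * y₁ i a + u i - (∑ j, ((l j + l' j : ℕ) : ℂ) * d j i) * τ)) *
        starTerm η τ d f g u y₁ y₂ := by
  have hexp : Complex.exp (-(2 * (Real.pi : ℂ) * I) *
        ((n i : ℂ) * y₁ i a + u i - (∑ j, (l j : ℂ) * d j i) * τ)) *
      ∏ j, Complex.exp (2 * Real.pi * I * (d i j * τ)) ^ l' j
      = Complex.exp (-(2 * (Real.pi : ℂ) * I) *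
          ((n i : ℂ) * y₁ i a + u i - (∑ j, ((l j + l' j : ℕ) : ℂ) * d j i) * τ)) := by
    have hsum : ∑ j, (l' j : ℂ) * (d i j * τ) = (∑ j, (l' j : ℂ) * d j i) * τ := by
      simp only [sum_mul, hd i, mul_assoc]
    rw [prod_exp_mul_pow, hsum, ← Complex.exp_add]
    congr 1
    push_cast [add_mul, sum_add_distrib]
    ring
  rw [starTerm, starTerm, (hfq y₁ u i a).2,
    crossFactor_update_left η τ d η _ (thetaRatio_add_eta η), ← hexp]
  ring

theorem starTerm_update_right_add_eta (hgq : QuasiPeriodic η τ d n g)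
    (y₁ : ∀ i, Fin (l i) → ℂ) (y₂ : ∀ j, Fin (l' j) → ℂ) (b : Fin (l' i)) :
    starTerm η τ d f g u y₁ (update y₂ i (update (y₂ i) b (y₂ i b + η)))
      = Complex.exp (-(2 * (Real.pi : ℂ) * I) *
          ((n i : ℂ) * y₂ i b + u i - (∑ j, ((l j + l' j : ℕ) : ℂ) * d j i) * τ)) *
        starTerm η τ d f g u y₁ y₂ := by
  have hexp : Complex.exp (-(2 * (Real.pi : ℂ) * I) * ((n i : ℂ) * y₂ i b
        + (u i - 2 * (∑ j, (l j : ℂ) * d j i) * τ) - (∑ j, (l' j : ℂ) * d j i) * τ)) *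
      ∏ j, Complex.exp (-(2 * Real.pi * I) * (d j i * τ)) ^ l j
      = Complex.exp (-(2 * (Real.pi : ℂ) * I) *
          ((n i : ℂ) * y₂ i b + u i - (∑ j, ((l j + l' j : ℕ) : ℂ) * d j i) * τ)) := by
    have hsum : ∑ j, (l j : ℂ) * (d j i * τ) = (∑ j, (l j : ℂ) * d j i) * τ := by
      simp only [sum_mul, mul_assoc]
    rw [prod_exp_mul_pow, hsum, ← Complex.exp_add]
    congr 1
    push_cast [add_mul, sum_add_distrib]
    ring
  rw [starTerm, starTerm, (hgq y₂ _ i b).2,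
    crossFactor_update_right η τ d η _ (thetaRatio_sub_eta η), ← hexp]
  ring

end StarProduct

theorem starMul_quasiPeriodic_general {h : ℕ} (η : ℂ) (τ : ℂ)
    (d : Fin h → Fin h → ℂ) (hd : ∀ i j, d i j = d j i) (n : Fin h → ℤ)
    (l l' : Fin h → ℕ) (f : FF h l) (g : FF h l')
    (hfq : QuasiPeriodic η τ d n f) (hgq : QuasiPeriodic η τ d n g)
    (x : ∀ i : Fin h, Fin (l i + l' i) → ℂ) (u : Fin h → ℂ)
    (i : Fin h) (a : Fin (l i + l' i)) :
    starMul η τ d f g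
        (Function.update x i (Function.update (x i) a (x i a + 1))) u =
      starMul η τ d f g x u ∧
    starMul η τ d f g
        (Function.update x i (Function.update (x i) a (x i a + η))) u =
      Complex.exp (-(2 * (Real.pi : ℂ) * I) *
          ((n i : ℂ) * x i a + u i - (∑ j : Fin h, ((l j + l' j : ℕ) : ℂ) * d j i) * τ)) *
        starMul η τ d f g x u := by
  constructor
  · simpa using starMul_update_eq_mul η τ d f g u i 1 (fun _ => 1)
      (by simpa using starTerm_update_left_add_one η τ d n u i hfq)
      (by simpa using starTerm_update_right_add_one η τ d n u i hgq) x a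
  · exact starMul_update_eq_mul η τ d f g u i η
      (fun z => Complex.exp (-(2 * (Real.pi : ℂ) * I) *
        ((n i : ℂ) * z + u i - (∑ j : Fin h, ((l j + l' j : ℕ) : ℂ) * d j i) * τ)))
      (starTerm_update_left_add_eta η τ d n u i hd hfq)
      (starTerm_update_right_add_eta η τ d n u i hgq) x a

/-- Part of Proposition 2: the product `*` of formula (2) preserves quasi-periodicity
(property 2), at every point where `θ(x_{a,p} − x_{b,q}) ≠ 0` for all distinct slots. -/
theorem starMul_quasiPeriodic {h : ℕ} (hh : 1 ≤ h) (η : ℂ) (hη : 0 < η.im) (τ : ℂ)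
    (d : Fin h → Fin h → ℂ) (hd : ∀ i j, d i j = d j i) (n : Fin h → ℤ)
    (l l' : Fin h → ℕ) (f : FF h l) (g : FF h l')
    (hf : IsSymFF f) (hg : IsSymFF g)
    (hfq : QuasiPeriodic η τ d n f) (hgq : QuasiPeriodic η τ d n g)
    (x : ∀ i : Fin h, Fin (l i + l' i) → ℂ) (u : Fin h → ℂ)
    (hx : ∀ (i j : Fin h) (a : Fin (l i + l' i)) (b : Fin (l j + l' j)),
      (⟨i, a⟩ : Σ i : Fin h, Fin (l i + l' i)) ≠ ⟨j, b⟩ →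
      theta η (x i a - x j b) ≠ 0)
    (i : Fin h) (a : Fin (l i + l' i)) :
    starMul η τ d f g
        (Function.update x i (Function.update (x i) a (x i a + 1))) u =
      starMul η τ d f g x u ∧
    starMul η τ d f g
        (Function.update x i (Function.update (x i) a (x i a + η))) u =
      Complex.exp (-(2 * (Real.pi : ℂ) * I) *
          ((n i : ℂ) * x i a + u i - (∑ j : Fin h, ((l j + l' j : ℕ) : ℂ) * d j i) * τ)) *
        starMul η τ d f g x u :=
  starMul_quasiPeriodic_general η τ d hd n l l' f g hfq hgq x u i a
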